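/- Assume L_d is twice continuously differentiable and f⁻, f⁺ are continuously differentiable. Then for every x ∈ E × E and all U, V ∈ E × E one has ω⁺(x)(U,V) − ω⁻(x)(U,V) = −df_d(x)(U,V), where f_d is regarded as a 1-form on E × E via f_d(q0,q1)(u0,u1) := f⁻(q0,q1)(u0) + f⁺(q0,q1)(u1). -/

import Mathlib

open ContinuousLinearMap

variable {E : Type*} [NormedAddCommGroup E] [NormedSpace ℝ E] [FiniteDimensional ℝ E]

/-- Partial Fréchet derivative in the first variable. -/
noncomputable def D1 (L : E × E → ℝ) (x : E × E) : E →L[ℝ] ℝ :=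
  fderiv ℝ (fun a => L (a, x.2)) x.1

/-- Partial Fréchet derivative in the second variable. -/
noncomputable def D2 (L : E × E → ℝ) (x : E × E) : E →L[ℝ] ℝ :=
  fderiv ℝ (fun b => L (x.1, b)) x.2

/-- The force 1-form `f_d` on `E × E`. -/
noncomputable def fd (fm fp : E × E → (E →L[ℝ] ℝ)) (x : E × E) : (E × E) →L[ℝ] ℝ :=
  (fm x).comp (ContinuousLinearMap.fst ℝ E E) + (fp x).comp (ContinuousLinearMap.snd ℝ E E)

/-- The 1-form `θ⁺` on `E × E`. -/
noncomputable def thetaP (Ld : E × E → ℝ) (fp : E × E → (E →L[ℝ] ℝ)) (x : E × E) :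
    (E × E) →L[ℝ] ℝ := (D2 Ld x + fp x).comp (ContinuousLinearMap.snd ℝ E E)

/-- The 1-form `θ⁻` on `E × E`. -/
noncomputable def thetaM (Ld : E × E → ℝ) (fm : E × E → (E →L[ℝ] ℝ)) (x : E × E) :
    (E × E) →L[ℝ] ℝ := -((D1 Ld x + fm x).comp (ContinuousLinearMap.fst ℝ E E))

/-- The exterior derivative of a 1-form `α` on `E × E`, as a function of two vectors. -/
noncomputable def extd (α : E × E → ((E × E) →L[ℝ] ℝ)) (x : E × E) (U V : E × E) : ℝ :=
  fderiv ℝ α x U V - fderiv ℝ α x V U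

/-- The 2-form `ω⁺ := -dθ⁺` on `E × E`. -/
noncomputable def omegaP (Ld : E × E → ℝ) (fp : E × E → (E →L[ℝ] ℝ)) (x : E × E)
    (U V : E × E) : ℝ := -extd (thetaP Ld fp) x U V

/-- The 2-form `ω⁻ := -dθ⁻` on `E × E`. -/
noncomputable def omegaM (Ld : E × E → ℝ) (fm : E × E → (E →L[ℝ] ℝ)) (x : E × E)
    (U V : E × E) : ℝ := -extd (thetaM Ld fm) x U V

/-- The forced discrete Legendre transform `FL⁺`. -/
noncomputable def FLp (Ld : E × E → ℝ) (fp : E × E → (E →L[ℝ] ℝ)) (x : E × E) :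
    E × (E →L[ℝ] ℝ) := (x.2, D2 Ld x + fp x)

/-- The forced discrete Legendre transform `FL⁻`. -/
noncomputable def FLm (Ld : E × E → ℝ) (fm : E × E → (E →L[ℝ] ℝ)) (x : E × E) :
    E × (E →L[ℝ] ℝ) := (x.1, -D1 Ld x - fm x)

/-! Since `θ⁺ - θ⁻ = dL_d + f_d` as 1-forms on `E × E`, we get `ω⁺ - ω⁻ = -d(dL_d) - df_d`, and
`d(dL_d) = 0` by the symmetry of the second derivative of a `C²` function. -/

section

variable {F : Type*} [NormedAddCommGroup F] [NormedSpace ℝ F]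

theorem extd_add {α β : F × F → (F × F →L[ℝ] ℝ)} {x : F × F}
    (hα : DifferentiableAt ℝ α x) (hβ : DifferentiableAt ℝ β x) (U V : F × F) :
    extd (α + β) x U V = extd α x U V + extd β x U V := by
  simp only [extd, fderiv_add hα hβ, add_apply]
  ring

theorem extd_fderiv_eq_zero {L : F × F → ℝ} {x : F × F} (hL : ContDiffAt ℝ 2 L x)
    (U V : F × F) : extd (fderiv ℝ L) x U V = 0 :=
  sub_eq_zero.2 (hL.isSymmSndFDerivAt (by simp) U V)

theorem D1_eq_fderiv_comp_inl {L : F × F → ℝ} {x : F × F} (hL : DifferentiableAt ℝ L x) :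
    D1 L x = (fderiv ℝ L x).comp (inl ℝ F F) :=
  (hL.hasFDerivAt.comp x.1 (hasFDerivAt_prodMk_left x.1 x.2)).fderiv

theorem D2_eq_fderiv_comp_inr {L : F × F → ℝ} {x : F × F} (hL : DifferentiableAt ℝ L x) :
    D2 L x = (fderiv ℝ L x).comp (inr ℝ F F) :=
  (hL.hasFDerivAt.comp x.2 (hasFDerivAt_prodMk_right x.1 x.2)).fderiv

theorem fderiv_apply_eq_D1_add_D2 {L : F × F → ℝ} {x : F × F} (hL : DifferentiableAt ℝ L x)
    (u : F × F) : fderiv ℝ L x u = D1 L x u.1 + D2 L x u.2 := by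
  rw [D1_eq_fderiv_comp_inl hL, D2_eq_fderiv_comp_inr hL, comp_apply, comp_apply, ← map_add,
    inl_apply, inr_apply, Prod.mk_add_mk, add_zero, zero_add]

theorem thetaP_eq_fderiv_add_fd_add_thetaM {L : F × F → ℝ} (hL : Differentiable ℝ L)
    (fm fp : F × F → (F →L[ℝ] ℝ)) :
    thetaP L fp = fderiv ℝ L + fd fm fp + thetaM L fm := by
  funext y
  refine ContinuousLinearMap.ext fun u => ?_
  simp only [thetaP, thetaM, fd, fderiv_apply_eq_D1_add_D2 (hL y), Pi.add_apply, add_apply,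
    neg_apply, comp_apply, coe_fst', coe_snd']
  ring

theorem differentiable_fd {fm fp : F × F → (F →L[ℝ] ℝ)} (hfm : Differentiable ℝ fm)
    (hfp : Differentiable ℝ fp) : Differentiable ℝ (fd fm fp) :=
  (hfm.clm_comp (differentiable_const _)).add (hfp.clm_comp (differentiable_const _))

theorem differentiable_thetaM {L : F × F → ℝ} {fm : F × F → (F →L[ℝ] ℝ)}
    (hL : Differentiable ℝ L) (hdL : Differentiable ℝ (fderiv ℝ L)) (hfm : Differentiable ℝ fm) :
    Differentiable ℝ (thetaM L fm) := by
  have hD1 : D1 L = fun y => (fderiv ℝ L y).comp (inl ℝ F F) :=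
    funext fun y => D1_eq_fderiv_comp_inl (hL y)
  unfold thetaM
  rw [hD1]
  exact (((hdL.clm_comp (differentiable_const _)).add hfm).clm_comp (differentiable_const _)).neg

end

/-- **`ω⁺ − ω⁻ = −d f_d`.** -/
theorem omegaP_sub_omegaM_eq_neg_extd_fd
    (Ld : E × E → ℝ) (fm fp : E × E → (E →L[ℝ] ℝ))
    (hLd : ContDiff ℝ 2 Ld) (hfm : ContDiff ℝ 1 fm) (hfp : ContDiff ℝ 1 fp) :
    ∀ (x : E × E) (U V : E × E),
      omegaP Ld fp x U V - omegaM Ld fm x U V = -extd (fd fm fp) x U V := by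
  intro x U V
  have hLd' : Differentiable ℝ Ld := hLd.differentiable two_ne_zero
  have hdLd : Differentiable ℝ (fderiv ℝ Ld) :=
    (hLd.fderiv_right (m := 1) (by norm_num)).differentiable one_ne_zero
  have hfd := differentiable_fd (hfm.differentiable one_ne_zero) (hfp.differentiable one_ne_zero)
  have hθm := differentiable_thetaM hLd' hdLd (hfm.differentiable one_ne_zero)
  rw [omegaP, omegaM, thetaP_eq_fderiv_add_fd_add_thetaM hLd' fm fp,
    extd_add ((hdLd.add hfd) x) (hθm x), extd_add (hdLd x) (hfd x),
    extd_fderiv_eq_zero hLd.contDiffAt]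
  ring
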